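/- arXiv:math/0204205 — 2 statements merged into one kernel-verified Lean document; each statement's English description precedes it below -/
import Mathlib

section
/- Let $\alpha_1, \dots, \alpha_n \in \mathbb{R}$ satisfy the Diophantine condition: there exist $C > 0$ and $N \in \mathbb{N}$ such that $|m_1\alpha_1 + \cdots + m_n\alpha_n|^{-1} \le C(|m_1| + \cdots + |m_n|)^N$ for all $(m_1,\dots,m_n) \in \mathbb{Z}^n \setminus \{0\}$. Then for every rapidly decreasing function $g: \mathbb{Z}^n \to \mathbb{C}$ with $g(0) = 0$, the function $f: \mathbb{Z}^n \to \mathbb{C}$ defined by $f(m) = g(m)/(m_1\alpha_1 + \cdots + m_n\alpha_n)$ for $m \ne 0$ and $f(0) = 0$ is also rapidly decreasing. -/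
/-- Under the Diophantine condition
`|m·α|⁻¹ ≤ C (|m₁| + ⋯ + |mₙ|)^N` for all nonzero `m ∈ ℤⁿ`, division of a
rapidly decreasing function `g` on `ℤⁿ` (with `g 0 = 0`) by `m·α` again yields
a rapidly decreasing function. -/
theorem diophantine_division_rapid_decay
    (n : ℕ) (α : Fin n → ℝ) (C : ℝ) (hC : 0 < C) (N : ℕ)
    (hdio : ∀ m : Fin n → ℤ, m ≠ 0 →
      |∑ i, (m i : ℝ) * α i|⁻¹ ≤ C * (∑ i, |(m i : ℝ)|) ^ N)
    (g : (Fin n → ℤ) → ℂ)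
    (hg : ∀ k : ℕ, ∃ Ck : ℝ, ∀ m : Fin n → ℤ,
      ‖g m‖ * (1 + ∑ i, |(m i : ℝ)|) ^ k ≤ Ck)
    (hg0 : g 0 = 0)
    (f : (Fin n → ℤ) → ℂ)
    (hf : ∀ m : Fin n → ℤ, m ≠ 0 →
      f m = g m / ((∑ i, (m i : ℝ) * α i : ℝ) : ℂ))
    (hf0 : f 0 = 0) :
    ∀ k : ℕ, ∃ Ck : ℝ, ∀ m : Fin n → ℤ,
      ‖f m‖ * (1 + ∑ i, |(m i : ℝ)|) ^ k ≤ Ck := by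
  intro k
  obtain ⟨Ck', hCk'⟩ := hg (k + N)
  have hCk'0 : 0 ≤ Ck' := le_trans (by positivity) (hCk' 0)
  refine ⟨C * Ck', fun m => ?_⟩
  set S : ℝ := ∑ i, |(m i : ℝ)| with hS
  have hS0 : 0 ≤ S := Finset.sum_nonneg fun i _ => abs_nonneg _
  have h1S : (0:ℝ) < 1 + S := by linarith
  by_cases hm : m = 0
  · rw [hm, hf0]
    simp only [norm_zero, zero_mul]
    positivity
  · rw [hf m hm]
    have hSN : S ^ N ≤ (1 + S) ^ N := pow_le_pow_left₀ hS0 (by linarith) N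
    have hdiv : ‖g m / ((∑ i, (m i : ℝ) * α i : ℝ) : ℂ)‖
        = ‖g m‖ * |∑ i, (m i : ℝ) * α i|⁻¹ := by
      rw [norm_div, Complex.norm_real, Real.norm_eq_abs, div_eq_mul_inv]
    rw [hdiv]
    calc ‖g m‖ * |∑ i, (m i : ℝ) * α i|⁻¹ * (1 + S) ^ k
        ≤ ‖g m‖ * (C * S ^ N) * (1 + S) ^ k := by
          gcongr
          exact hdio m hm
      _ ≤ ‖g m‖ * (C * (1 + S) ^ N) * (1 + S) ^ k := by gcongr
      _ = C * (‖g m‖ * (1 + S) ^ (k + N)) := by ring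
      _ ≤ C * Ck' := by gcongr; exact hCk' m
end

section
/- Let $D, D'$ be two commuting derivations of an associative algebra $A$ and $\tau$ a trace with $\tau \circ D = \tau \circ D' = 0$. Then the Hochschild 2-cochains $i_D i_{D'}\tau$ and $i_{D'}i_D\tau$, where $(i_D\phi)(a_0, \dots, a_{l+1}) = \phi(a_0 D(a_1), a_2, \dots, a_{l+1})$, satisfy $i_D i_{D'}\tau + i_{D'} i_D \tau = b\psi$ for the $1$-cochain $\psi(a_0, a_1) = \tau(a_0\, D D'(a_1))$, i.e., $i_D i_{D'}\tau = -i_{D'}i_D\tau$ in Hochschild cohomology. -/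
/-- For two commuting derivations `D, D'` of an associative
algebra `A` and a trace `τ` with `τ ∘ D = τ ∘ D' = 0`, the Hochschild
`2`-cochains `(i_D i_{D'} τ)(a₀,a₁,a₂) = τ(a₀ · D a₁ · D' a₂)` and
`i_{D'} i_D τ` satisfy
`i_D i_{D'} τ + i_{D'} i_D τ = b ψ` for the `1`-cochain
`ψ(a₀, a₁) = ± τ(a₀ · D D'(a₁))` (with the coboundary convention
`(bψ)(a₀,a₁,a₂) = ψ(a₀a₁, a₂) - ψ(a₀, a₁a₂) + ψ(a₂a₀, a₁)`, the correct sign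
is `ψ = -τ(· D D' ·)`); hence `i_D i_{D'} τ = - i_{D'} i_D τ` in Hochschild
cohomology. -/
theorem contractions_anticommute_up_to_coboundary
    {A : Type*} [Ring A] [Algebra ℂ A]
    (τ : A →ₗ[ℂ] ℂ) (htr : ∀ a b : A, τ (a * b) = τ (b * a))
    (D D' : A →ₗ[ℂ] A)
    (hD : ∀ a b : A, D (a * b) = D a * b + a * D b)
    (hD' : ∀ a b : A, D' (a * b) = D' a * b + a * D' b)
    (hcomm : ∀ a : A, D (D' a) = D' (D a))
    (hinvD : ∀ a : A, τ (D a) = 0) (hinvD' : ∀ a : A, τ (D' a) = 0) :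
    ∀ a₀ a₁ a₂ : A,
      τ (a₀ * D a₁ * D' a₂) + τ (a₀ * D' a₁ * D a₂) =
        -(τ ((a₀ * a₁) * D (D' a₂)) - τ (a₀ * D (D' (a₁ * a₂))) +
            τ ((a₂ * a₀) * D (D' a₁))) := by
  intro a₀ a₁ a₂
  have hexp : D (D' (a₁ * a₂)) =
      D (D' a₁) * a₂ + D' a₁ * D a₂ + (D a₁ * D' a₂ + a₁ * D (D' a₂)) := by
    rw [hD', map_add, hD, hD]
  have h := htr (a₀ * D (D' a₁)) a₂
  rw [← mul_assoc] at h
  simp only [hexp, map_add, mul_add, ← mul_assoc]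
  linear_combination -h
end
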